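/- Fix positive integers n, r and an integer t ≥ 2 with t < s. For all sufficiently large s, ⌊(Σ_{k=n}^∞ 1/f_{rk}(s,-t))^{-1}⌋ = f_{rn}(s,-t) - f_{r(n-1)}(s,-t) - 1. -/

import Mathlib

/-!
For `u k = f_{rk}` one has `u (k+2) = V u (k+1) - t^r u k` with `V = f_{r+1} - t f_{r-1}`, hence the
Cassini identity `u (k+1)^2 - u k u (k+2) = t^{rk} f_r^2`. Writing `d k = u (k+1) - u k`, this
identity gives `1/d k - 1/d (k+1) < 1/u (k+1) ≤ 1/(d k - 1) - 1/(d (k+1) - 1)` once `s` is large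
compared with `t`. Telescoping from `k = n - 1` puts the tail sum in `(1/d, 1/(d - 1)]` with
`d = f_{rn} - f_{r(n-1)}`, so the floor of its reciprocal is `d - 1`.
-/

/-- Generalized Fibonacci sequence: f 0 = 0, f 1 = 1, f (n+2) = s * f (n+1) + t * f n. -/
def genFib (s t : ℤ) : ℕ → ℤ
  | 0 => 0
  | 1 => 1
  | n + 2 => s * genFib s t (n + 1) + t * genFib s t n

open Filter Topology

section Recurrence

variable {R : Type*} [CommRing R] {a b : R} {x : ℕ → R}

theorem cassini_of_rec (hx : ∀ k, x (k + 2) = a * x (k + 1) + b * x k) (k : ℕ) :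
    x (k + 1) ^ 2 - x k * x (k + 2) = (-b) ^ k * (x 1 ^ 2 - x 0 * x 2) := by
  induction k with
  | zero => ring
  | succ k ih =>
    linear_combination (-b) * ih - x (k + 1) * hx (k + 1) + x (k + 2) * hx k

end Recurrence

section Growth

variable {R : Type*} [CommRing R] [LinearOrder R] [IsStrictOrderedRing R] {L T : R} {u : ℕ → R}

theorem nonneg_and_pow_mul_le_sub_of_rec (h0 : u 0 = 0) (h1 : 0 ≤ u 1) (hL : 1 ≤ L)
    (hTL : T + 1 ≤ L) (hrec : ∀ k, u (k + 2) = L * u (k + 1) - T * u k) (k : ℕ) :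
    0 ≤ u k ∧ (L - 1) ^ k * u 1 ≤ u (k + 1) - u k := by
  induction k with
  | zero => simp [h0]
  | succ k ih =>
    obtain ⟨hk, hd⟩ := ih
    have hpow : 0 ≤ (L - 1) ^ k * u 1 := mul_nonneg (pow_nonneg (by linarith) k) h1
    refine ⟨by linarith, ?_⟩
    -- u (k+2) - u (k+1) = (L - 1) (u (k+1) - u k) + (L - 1 - T) u k
    rw [hrec, pow_succ, mul_right_comm]
    nlinarith [mul_le_mul_of_nonneg_left hd (by linarith : (0 : R) ≤ L - 1),
      mul_nonneg (by linarith : (0 : R) ≤ L - 1 - T) hk]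

end Growth

section Telescoping

variable {K : Type*} [Field K] [LinearOrder K] [IsStrictOrderedRing K] {x y z : K}

theorem one_div_sub_one_div_lt_one_div (hy : 0 < y) (hxy : x < y) (hyz : y < z)
    (h : x * z < y ^ 2) : 1 / (y - x) - 1 / (z - y) < 1 / y := by
  -- (y - x) (z - y) = y ((z - y) - (y - x)) + (y ^ 2 - x z)
  rw [div_sub_div _ _ (sub_pos.2 hxy).ne' (sub_pos.2 hyz).ne',
    div_lt_div_iff₀ (mul_pos (sub_pos.2 hxy) (sub_pos.2 hyz)) hy]
  nlinarith

theorem one_div_le_one_div_sub_one_div (hy : 0 < y) (hxy : x + 1 < y) (hyz : y + 1 < z)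
    (h : y ^ 2 - x * z ≤ z - x - 1) : 1 / y ≤ 1 / (y - x - 1) - 1 / (z - y - 1) := by
  have hd : 0 < y - x - 1 := by linarith
  have hd' : 0 < z - y - 1 := by linarith
  rw [div_sub_div _ _ hd.ne' hd'.ne', div_le_div_iff₀ hy (mul_pos hd hd')]
  nlinarith

theorem hasSum_sub_succ_of_antitone {g : ℕ → ℝ} (hg : Antitone g)
    (hlim : Tendsto g atTop (𝓝 0)) :
    HasSum (fun k => g k - g (k + 1)) (g 0) := by
  refine (hasSum_iff_tendsto_nat_of_nonneg (fun k => sub_nonneg.2 (hg k.le_succ)) _).2 ?_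
  simp only [Finset.sum_range_sub']
  simpa using hlim.const_sub (g 0)

end Telescoping

/-- These conditions squeeze `1 / u (k+1)` between the telescoping differences of `1 / d k` and of
`1 / (d k - 1)`, where `d k = u (k+1) - u k`. -/
structure CassiniBounded (u : ℕ → ℤ) : Prop where
  nonneg_zero : 0 ≤ u 0
  one_le_sub_zero : 1 ≤ u 1 - u 0
  sub_lt_sub_succ : ∀ k, u (k + 1) - u k < u (k + 2) - u (k + 1)
  cassini_pos : ∀ k, 0 < u (k + 1) ^ 2 - u k * u (k + 2)
  cassini_lt : ∀ k, u (k + 1) ^ 2 - u k * u (k + 2) < u (k + 2) - u k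

namespace CassiniBounded

variable {u : ℕ → ℤ}

theorem sub_zero_add_le (hu : CassiniBounded u) (k : ℕ) : u 1 - u 0 + k ≤ u (k + 1) - u k := by
  induction k with
  | zero => simp
  | succ k ih =>
    push_cast
    linarith [hu.sub_lt_sub_succ k]

theorem one_le_sub (hu : CassiniBounded u) (k : ℕ) : 1 ≤ u (k + 1) - u k := by
  linarith [hu.sub_zero_add_le k, hu.one_le_sub_zero, (Nat.cast_nonneg k : (0 : ℤ) ≤ k)]

theorem nonneg (hu : CassiniBounded u) (k : ℕ) : 0 ≤ u k := by
  induction k with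
  | zero => exact hu.nonneg_zero
  | succ k ih => linarith [hu.one_le_sub k]

theorem shift (hu : CassiniBounded u) (p : ℕ) : CassiniBounded (fun k => u (k + p)) where
  nonneg_zero := hu.nonneg _
  one_le_sub_zero := by simpa [add_comm 1 p] using hu.one_le_sub p
  sub_lt_sub_succ k := by
    simpa only [Nat.add_right_comm _ p] using hu.sub_lt_sub_succ (k + p)
  cassini_pos k := by
    simpa only [Nat.add_right_comm _ p] using hu.cassini_pos (k + p)
  cassini_lt k := by
    simpa only [Nat.add_right_comm _ p] using hu.cassini_lt (k + p)

theorem tendsto_sub (hu : CassiniBounded u) :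
    Tendsto (fun k => (u (k + 1) - u k : ℝ)) atTop atTop := by
  refine tendsto_atTop_mono (fun k => ?_)
    (tendsto_atTop_add_const_left _ ((u 1 - u 0 : ℤ) : ℝ) tendsto_natCast_atTop_atTop)
  exact_mod_cast hu.sub_zero_add_le k

theorem monotone_sub (hu : CassiniBounded u) : Monotone (fun k => (u (k + 1) : ℝ) - u k) :=
  fun _ _ hij => by
    dsimp only
    exact_mod_cast (strictMono_nat_of_lt_succ hu.sub_lt_sub_succ).monotone hij

theorem hasSum_one_div_sub_sub (hu : CassiniBounded u) {c : ℝ} (hc : c < u 1 - u 0) :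
    HasSum (fun k => 1 / (u (k + 1) - u k - c : ℝ) - 1 / (u (k + 2) - u (k + 1) - c))
      (1 / (u 1 - u 0 - c)) := by
  have hpos (k : ℕ) : 0 < (u (k + 1) - u k - c : ℝ) := by
    linarith [hu.monotone_sub k.zero_le]
  refine hasSum_sub_succ_of_antitone (g := fun k => 1 / (u (k + 1) - u k - c : ℝ))
    (fun i j hij => one_div_le_one_div_of_le (hpos i) (by linarith [hu.monotone_sub hij])) ?_
  simpa only [one_div, Function.comp_def, ← sub_eq_add_neg] using
    tendsto_inv_atTop_zero.comp (tendsto_atTop_add_const_right _ (-c) hu.tendsto_sub)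

theorem one_div_sub_one_div_lt (hu : CassiniBounded u) (k : ℕ) :
    1 / (u (k + 1) - u k : ℝ) - 1 / (u (k + 2) - u (k + 1)) < 1 / (u (k + 1) : ℝ) := by
  have h0 := hu.nonneg k
  have h1 := hu.one_le_sub k
  have h2 := hu.one_le_sub (k + 1)
  have h3 := hu.cassini_pos k
  apply one_div_sub_one_div_lt_one_div <;> exact_mod_cast (by linarith)

theorem one_div_le_one_div_sub_one_div (hu : CassiniBounded u) {k : ℕ}
    (hk : 2 ≤ u (k + 1) - u k) :
    1 / (u (k + 1) : ℝ) ≤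
      1 / (u (k + 1) - u k - 1 : ℝ) - 1 / (u (k + 2) - u (k + 1) - 1) := by
  have h0 := hu.nonneg k
  have h2 := hu.sub_lt_sub_succ k
  have h3 := hu.cassini_lt k
  apply _root_.one_div_le_one_div_sub_one_div <;> exact_mod_cast (by linarith)

theorem summable_of_two_le (hu : CassiniBounded u) (h2 : 2 ≤ u 1 - u 0) :
    Summable (fun k => 1 / (u (k + 1) : ℝ)) :=
  .of_nonneg_of_le (fun k => by have := hu.nonneg (k + 1); positivity)
    (fun k => hu.one_div_le_one_div_sub_one_div (by linarith [hu.sub_zero_add_le k]))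
    (hu.hasSum_one_div_sub_sub (by exact_mod_cast (by linarith) : (1 : ℝ) < u 1 - u 0)).summable

theorem summable (hu : CassiniBounded u) : Summable (fun k => 1 / (u (k + 1) : ℝ)) :=
  (summable_nat_add_iff 1).1 <| (hu.shift 1).summable_of_two_le <| by
    linarith [hu.sub_lt_sub_succ 0, hu.one_le_sub_zero]

theorem tsum_le (hu : CassiniBounded u) (h2 : 2 ≤ u 1 - u 0) :
    ∑' k, 1 / (u (k + 1) : ℝ) ≤ 1 / (u 1 - u 0 - 1 : ℝ) :=
  hasSum_le (fun k => hu.one_div_le_one_div_sub_one_div (by linarith [hu.sub_zero_add_le k]))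
    hu.summable.hasSum
    (hu.hasSum_one_div_sub_sub (by exact_mod_cast (by linarith) : (1 : ℝ) < u 1 - u 0))

theorem lt_tsum (hu : CassiniBounded u) :
    1 / (u 1 - u 0 : ℝ) < ∑' k, 1 / (u (k + 1) : ℝ) := by
  have hc : (0 : ℝ) < u 1 - u 0 := by exact_mod_cast (by linarith [hu.one_le_sub_zero])
  have htel := hu.hasSum_one_div_sub_sub hc
  simp only [sub_zero] at htel
  exact hasSum_lt (fun k => (hu.one_div_sub_one_div_lt k).le) (hu.one_div_sub_one_div_lt 0) htel
    hu.summable.hasSum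

theorem floor_inv_tsum (hu : CassiniBounded u) :
    ⌊(∑' k, 1 / (u (k + 1) : ℝ))⁻¹⌋ = u 1 - u 0 - 1 := by
  have hd : (0 : ℝ) < u 1 - u 0 := by exact_mod_cast hu.one_le_sub_zero
  have hlt : (u 1 - u 0 : ℝ)⁻¹ < ∑' k, 1 / (u (k + 1) : ℝ) :=
    one_div (u 1 - u 0 : ℝ) ▸ hu.lt_tsum
  have hS : 0 < ∑' k, 1 / (u (k + 1) : ℝ) := (inv_pos.2 hd).trans hlt
  rw [Int.floor_eq_iff]
  push_cast
  refine ⟨?_, by linarith [inv_lt_of_inv_lt₀ hd hlt]⟩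
  rcases hu.one_le_sub_zero.eq_or_lt with h1 | h2
  · have : (u 1 - u 0 : ℝ) = 1 := by exact_mod_cast h1.symm
    simpa [this] using (inv_pos.2 hS).le
  · exact le_inv_of_le_inv₀ hS (one_div (u 1 - u 0 - 1 : ℝ) ▸ hu.tsum_le h2)

end CassiniBounded

theorem cassiniBounded_of_rec {u : ℕ → ℤ} {L T : ℤ} (h0 : u 0 = 0) (h1 : 1 ≤ u 1)
    (hT : 1 ≤ T) (hTL : T + 1 ≤ L) (hL : u 1 + 2 ≤ L)
    (hrec : ∀ k, u (k + 2) = L * u (k + 1) - T * u k) :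
    CassiniBounded u := by
  have hgrowth := nonneg_and_pow_mul_le_sub_of_rec h0 (by linarith) (by linarith) hTL hrec
  have hcassini (k : ℕ) : u (k + 1) ^ 2 - u k * u (k + 2) = T ^ k * u 1 ^ 2 := by
    rw [cassini_of_rec (a := L) (b := -T) (fun k => by rw [hrec]; ring), neg_neg, h0]
    ring
  refine ⟨h0.ge, by linarith, fun k => ?_, fun k => ?_, fun k => ?_⟩
  · have hd : 1 ≤ u (k + 1) - u k :=
      le_trans (one_le_mul_of_one_le_of_one_le (one_le_pow₀ (by linarith)) h1) (hgrowth k).2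
    rw [hrec]
    nlinarith [mul_nonneg (by linarith : (0 : ℤ) ≤ L - 1 - T) (hgrowth k).1]
  · rw [hcassini]
    positivity
  · have hpow : T ^ k * u 1 ≤ (L - 1) ^ k * u 1 :=
      mul_le_mul_of_nonneg_right (pow_le_pow_left₀ (by linarith) (by linarith) k) (by linarith)
    have hsucc : (L - 1) * ((L - 1) ^ k * u 1) ≤ u (k + 2) - u (k + 1) := by
      rw [← mul_assoc, ← pow_succ']
      exact (hgrowth (k + 1)).2
    have hTk : 0 < T ^ k * u 1 := by positivity
    rw [hcassini]
    nlinarith [(hgrowth k).2]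

section GenFib

variable (s c : ℤ)

theorem genFib_add_two (k : ℕ) : genFib s c (k + 2) = s * genFib s c (k + 1) + c * genFib s c k :=
  rfl

theorem genFib_cassini (k : ℕ) :
    genFib s c (k + 1) ^ 2 - genFib s c k * genFib s c (k + 2) = (-c) ^ k := by
  rw [cassini_of_rec (genFib_add_two s c) k]
  simp [genFib]

theorem genFib_add (m n : ℕ) :
    genFib s c (m + n + 1) =
      genFib s c (m + 1) * genFib s c (n + 1) + c * genFib s c m * genFib s c n := by
  induction m using Nat.twoStepInduction with
  | zero => simp [genFib]
  | one => simp [add_comm 1 n, genFib]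
  | more m ih ih' =>
    rw [show m + 2 + n + 1 = m + n + 1 + 2 by omega, genFib_add_two,
      show m + n + 1 + 1 = m + 1 + n + 1 by omega, ih', ih, show m + 2 + 1 = m + 1 + 2 from rfl,
      genFib_add_two s c (m + 1), genFib_add_two s c m]
    ring

theorem genFib_add_two_mul (m a : ℕ) :
    genFib s c (a + 2 * (m + 1)) = (genFib s c (m + 2) + c * genFib s c m) *
      genFib s c (a + (m + 1)) - (-c) ^ (m + 1) * genFib s c a := by
  have h1 := genFib_add s c (a + m + 1) m
  have h2 := genFib_add s c a (m + 1)
  have h3 := genFib_add s c a m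
  rw [show a + m + 1 + m + 1 = a + 2 * (m + 1) by ring,
    show a + m + 1 + 1 = a + (m + 1) + 1 by ring] at h1
  rw [show a + (m + 1) = a + m + 1 by ring]
  linear_combination h1 + genFib s c (m + 1) * h2 - genFib s c (m + 2) * h3 +
    c * genFib s c a * genFib_cassini s c m

end GenFib

theorem cassiniBounded_genFib_mul {s t : ℤ} (ht : 1 ≤ t) (hs : 3 * t + 3 ≤ s) {r : ℕ}
    (hr : 0 < r) :
    CassiniBounded (fun k => genFib s (-t) (r * k)) := by
  obtain ⟨m, rfl⟩ : ∃ m, r = m + 1 := ⟨r - 1, by omega⟩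
  have hrec (k : ℕ) : genFib s (-t) ((m + 1) * (k + 2)) =
      (genFib s (-t) (m + 2) + -t * genFib s (-t) m) * genFib s (-t) ((m + 1) * (k + 1)) -
        t ^ (m + 1) * genFib s (-t) ((m + 1) * k) := by
    rw [show (m + 1) * (k + 2) = (m + 1) * k + 2 * (m + 1) by ring,
      show (m + 1) * (k + 1) = (m + 1) * k + (m + 1) by ring, genFib_add_two_mul, neg_neg]
  obtain ⟨hm, hdiff⟩ := nonneg_and_pow_mul_le_sub_of_rec (u := genFib s (-t)) (L := s) (T := t)
    rfl zero_le_one (by linarith) (by linarith) (fun k => by rw [genFib_add_two]; ring) m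
  have hF : t ^ m ≤ genFib s (-t) (m + 1) - genFib s (-t) m := by
    have : t ^ m ≤ (s - 1) ^ m := pow_le_pow_left₀ (by linarith) (by linarith) m
    rw [show genFib s (-t) 1 = 1 from rfl, mul_one] at hdiff
    linarith
  have htm : 1 ≤ t ^ m := one_le_pow₀ ht
  have h2tG : 2 * t * genFib s (-t) m ≤ 2 * t * genFib s (-t) (m + 1) :=
    mul_le_mul_of_nonneg_left (by linarith) (by linarith)
  have hsF : (3 * t + 3) * genFib s (-t) (m + 1) ≤ s * genFib s (-t) (m + 1) :=
    mul_le_mul_of_nonneg_right hs (by linarith)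
  refine cassiniBounded_of_rec (by simp [genFib]) (by simpa using htm.trans (by linarith))
    (one_le_pow₀ ht) ?_ ?_ (by simpa using hrec)
  · rw [genFib_add_two, pow_succ]
    nlinarith
  · rw [mul_one, genFib_add_two]
    nlinarith

/-- For fixed t ≥ 2, n, r and all sufficiently large s, the floor of the reciprocal
tail sum equals f_{rn} - f_{r(n-1)} - 1. -/
theorem fib_tail_floor_eventually (t : ℤ) (ht : 2 ≤ t) (n r : ℕ) (hn : 0 < n)
    (hr : 0 < r) :
    ∃ S : ℤ, ∀ s : ℤ, S ≤ s →
      ⌊(∑' k : ℕ, (1 : ℝ) / (genFib s (-t) (r * (n + k)) : ℝ))⁻¹⌋ =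
        genFib s (-t) (r * n) - genFib s (-t) (r * (n - 1)) - 1 := by
  refine ⟨3 * t + 3, fun s hs => ?_⟩
  have hidx (k : ℕ) : n + k = k + 1 + (n - 1) := by omega
  have := ((cassiniBounded_genFib_mul (by linarith) hs hr).shift (n - 1)).floor_inv_tsum
  simpa [hidx, add_comm 1, Nat.sub_add_cancel hn] using this
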